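/- Let H be a real symmetric positive-definite n×n matrix, μ > 0, and let B : ℝ^n → ℝ be differentiable and convex on ℝ^n. Fix θ ∈ ℝ^n and suppose U minimizes f(u) = (1/2)⟨u, Hu⟩ − ⟨θ, u⟩ + μB(u) over ℝ^n. Set θ' = θ + (I − H)U. Then U is the unique minimizer over ℝ^n of g(u) = (1/2)‖u‖² − ⟨θ', u⟩ + μB(u). -/

import Mathlib

/-!
Convexity of `μB` turns minimality of `U` for the first program into the variational inequality
`⟨HU - θ, u - U⟩ + μ(B u - B U) ≥ 0`: compare the cost at `U` and at `U + t(u - U)`, divide by `t`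
and let `t → 0⁺`. Since `U - θ' = HU - θ`, this is also the variational inequality of the second
program at `U`, and expanding `(1/2)‖u‖²` exactly around `U` gives `g u ≥ g U + (1/2)‖u - U‖²`,
hence minimality and uniqueness.
-/

open RealInnerProductSpace Filter Topology

lemma nonneg_of_forall_mem_Ioc_nonneg_add_mul {a b : ℝ}
    (h : ∀ t ∈ Set.Ioc (0 : ℝ) 1, 0 ≤ a + t * b) : 0 ≤ a := by
  have hlim : Tendsto (fun t : ℝ => a + t * b) (𝓝[>] 0) (𝓝 a) := by
    have hcont : Continuous fun t : ℝ => a + t * b := by fun_prop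
    simpa using (hcont.tendsto 0).mono_left nhdsWithin_le_nhds
  refine ge_of_tendsto hlim ?_
  filter_upwards [Ioc_mem_nhdsGT (zero_lt_one' ℝ)] with t ht using h t ht

section

variable {E : Type*} [NormedAddCommGroup E] [InnerProductSpace ℝ E]

lemma LinearMap.IsSymmetric.inner_add_map_add {T : E →ₗ[ℝ] E} (hT : T.IsSymmetric) (x d : E) :
    ⟪x + d, T (x + d)⟫ = ⟪x, T x⟫ + 2 * ⟪T x, d⟫ + ⟪d, T d⟫ := by
  rw [map_add, inner_add_left, inner_add_right, inner_add_right, ← hT x d, real_inner_comm d (T x)]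
  ring

lemma inner_sub_add_sub_nonneg_of_forall_le {T : E →ₗ[ℝ] E} (hT : T.IsSymmetric) {F : E → ℝ}
    (hF : ConvexOn ℝ Set.univ F) {θ U : E}
    (hU : ∀ u, (1 / 2) * ⟪U, T U⟫ - ⟪θ, U⟫ + F U ≤ (1 / 2) * ⟪u, T u⟫ - ⟪θ, u⟫ + F u) (u : E) :
    0 ≤ ⟪T U - θ, u - U⟫ + (F u - F U) := by
  apply nonneg_of_forall_mem_Ioc_nonneg_add_mul (b := ⟪u - U, T (u - U)⟫ / 2)
  rintro t ⟨ht0, ht1⟩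
  have hconv : F (U + t • (u - U)) ≤ (1 - t) * F U + t * F u := by
    have h := hF.2 (Set.mem_univ U) (Set.mem_univ u) (sub_nonneg.2 ht1) ht0.le (sub_add_cancel 1 t)
    rwa [show (1 - t) • U + t • u = U + t • (u - U) by module] at h
  have hquad := hT.inner_add_map_add U (t • (u - U))
  simp only [map_smul, inner_smul_left, inner_smul_right, RCLike.conj_to_real] at hquad
  have hmin := hU (U + t • (u - U))
  rw [hquad, inner_add_right, real_inner_smul_right] at hmin
  have hscaled : 0 ≤ t * (⟪T U - θ, u - U⟫ + (F u - F U) + t * (⟪u - U, T (u - U)⟫ / 2)) := by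
    rw [inner_sub_left]
    linarith
  exact (mul_nonneg_iff_of_pos_left ht0).1 hscaled

lemma add_half_norm_sub_sq_le_of_inner_sub_add_sub_nonneg {F : E → ℝ} {θ U : E}
    (hU : ∀ u, 0 ≤ ⟪U - θ, u - U⟫ + (F u - F U)) (u : E) :
    (1 / 2) * ‖U‖ ^ 2 - ⟪θ, U⟫ + F U + (1 / 2) * ‖u - U‖ ^ 2 ≤
      (1 / 2) * ‖u‖ ^ 2 - ⟪θ, u⟫ + F u := by
  have hsq := norm_add_sq_real U (u - U)
  rw [add_sub_cancel] at hsq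
  have hlin : ⟪θ, u⟫ = ⟪θ, U⟫ + ⟪θ, u - U⟫ := by rw [← inner_add_right, add_sub_cancel]
  have hvi := hU u
  rw [inner_sub_left] at hvi
  linarith

end

open Matrix

theorem barrierMPC_equivalent_feedback {n : ℕ}
    (H : Matrix (Fin n) (Fin n) ℝ) (hHsym : H.IsSymm)
    (μ : ℝ) (hμ : 0 < μ)
    (B : EuclideanSpace ℝ (Fin n) → ℝ)
    (hBconv : ConvexOn ℝ Set.univ B)
    (θ U : EuclideanSpace ℝ (Fin n))
    (hmin : ∀ u : EuclideanSpace ℝ (Fin n),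
      (1 / 2) * ⟪U, Matrix.toEuclideanLin H U⟫ - ⟪θ, U⟫ + μ * B U ≤
        (1 / 2) * ⟪u, Matrix.toEuclideanLin H u⟫ - ⟪θ, u⟫ + μ * B u)
    (θ' : EuclideanSpace ℝ (Fin n))
    (hθ' : θ' = θ + Matrix.toEuclideanLin ((1 : Matrix (Fin n) (Fin n) ℝ) - H) U) :
    (∀ u : EuclideanSpace ℝ (Fin n),
        (1 / 2) * ‖U‖ ^ 2 - ⟪θ', U⟫ + μ * B U ≤ (1 / 2) * ‖u‖ ^ 2 - ⟪θ', u⟫ + μ * B u) ∧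
      ∀ V : EuclideanSpace ℝ (Fin n),
        (∀ u : EuclideanSpace ℝ (Fin n),
          (1 / 2) * ‖V‖ ^ 2 - ⟪θ', V⟫ + μ * B V ≤ (1 / 2) * ‖u‖ ^ 2 - ⟪θ', u⟫ + μ * B u) →
        V = U := by
  have hsymm : (toEuclideanLin H).IsSymmetric :=
    isSymmetric_toEuclideanLin_iff.2 (isHermitian_iff_isSymm.2 hHsym)
  have hvi := inner_sub_add_sub_nonneg_of_forall_le hsymm (F := fun u => μ * B u)
    (hBconv.smul hμ.le) hmin
  have hθ'U : U - θ' = toEuclideanLin H U - θ := by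
    rw [hθ', map_sub, LinearMap.sub_apply, toLpLin_one, LinearMap.id_apply]
    abel
  have hgrowth := add_half_norm_sub_sq_le_of_inner_sub_add_sub_nonneg (F := fun u => μ * B u)
    (θ := θ') (U := U) (by simpa only [hθ'U] using hvi)
  refine ⟨fun u => (le_add_of_nonneg_right (by positivity)).trans (hgrowth u), fun V hV => ?_⟩
  have hdist : ‖V - U‖ ^ 2 ≤ 0 := by linarith [hgrowth V, hV U]
  have hnorm : ‖V - U‖ = 0 :=
    (pow_eq_zero_iff two_ne_zero).1 (le_antisymm hdist (by positivity))
  exact sub_eq_zero.1 (norm_eq_zero.1 hnorm)
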